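/- For every r > 0, the Lebesgue integral over ℝ² of the function (x, y) ↦ (x − y)^{−2} over the set E_r = {(x, y) ∈ ℝ² : x ≠ y and the geodesic γ(x,y) intersects B̄_r(i)} equals 2π·sinh r. (Equivalently, the invariant measure of the ε-thickened cross-section of the geodesic flow over the circle of hyperbolic radius r about i is (ε/(π·area S))·2π·sinh r = 2ε·sinh r/area S, which is Proposition 2.1 of the paper.) -/

import Mathlib

/-
For `z` on the semicircle `γ(a,b)`, `(a - b)² cosh² d(z,i) - (a² + 1)(b² + 1)` is a perfect square
divided by `(Im z)²`, and it vanishes at some point of `γ(a,b)`. Hence `γ(a,b)` meets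
`B̄_r(i)` iff `(a² + 1)(b² + 1) ≤ (a - b)² cosh² r`. For fixed `a`, the substitution `b = a + 1/t`
turns `(a - b)⁻² db` into `dt` and this condition into `|(a² + 1) t + a| ≤ sinh r`, an interval
of length `2 sinh r / (a² + 1)`; integrating over `a` gives `2π sinh r`.
-/
open UpperHalfPlane MeasureTheory

/-- The complete hyperbolic geodesic of the upper half-plane with ideal endpoints `a` and `b`:
the Euclidean semicircle `{z ∈ ℍ : |z − (a+b)/2| = |a−b|/2}`. -/
noncomputable def geodesic (a b : ℝ) : Set ℍ :=
  {z : ℍ | ‖(z : ℂ) - (((a + b) / 2 : ℝ) : ℂ)‖ = |a - b| / 2}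

/-- The geodesic `γ(a,b)` is tangent to the hyperbolic disc `B_ρ(i)`:
the infimum of the hyperbolic distance from points of the geodesic to `i` equals `ρ`. -/
def TangentToDisc (a b ρ : ℝ) : Prop :=
  sInf ((fun z : ℍ => dist z UpperHalfPlane.I) '' geodesic a b) = ρ

/-- The geodesic `γ(a,b)` intersects the closed hyperbolic disc `B̄_r(i)`. -/
def MeetsClosedDisc (a b r : ℝ) : Prop :=
  ∃ z ∈ geodesic a b, dist z UpperHalfPlane.I ≤ r

open Real Set

theorem cosh_dist_I (z : ℍ) :
    cosh (dist z I) = (z.re ^ 2 + z.im ^ 2 + 1) / (2 * z.im) := by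
  simp [cosh_dist']

theorem mem_geodesic_iff {a b : ℝ} {z : ℍ} :
    z ∈ geodesic a b ↔ (z.re - (a + b) / 2) ^ 2 + z.im ^ 2 = (a - b) ^ 2 / 4 := by
  rw [geodesic, mem_ofPred_eq, ← sq_eq_sq₀ (norm_nonneg _) (by positivity), Complex.sq_norm,
    Complex.normSq_apply, div_pow, sq_abs]
  simp only [Complex.sub_re, Complex.sub_im, coe_re, coe_im, Complex.ofReal_re,
    Complex.ofReal_im, sub_zero, sq]
  constructor <;> intro h <;> linarith

theorem sub_sq_mul_cosh_sq_dist_I_sub {a b : ℝ} {z : ℍ} (hz : z ∈ geodesic a b) :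
    (a - b) ^ 2 * cosh (dist z I) ^ 2 - (a ^ 2 + 1) * (b ^ 2 + 1) =
      ((z.re - (a + b) / 2) * ((a ^ 2 + b ^ 2) / 2 + 1) + (a + b) * (a - b) ^ 2 / 4) ^ 2 /
        z.im ^ 2 := by
  rw [mem_geodesic_iff] at hz
  have hq := z.im_pos.ne'
  rw [cosh_dist_I]
  field_simp
  linear_combination (256 * ((a - b) ^ 2 / 4 * ((a ^ 2 + b ^ 2) / 2 + 1
      + (a + b) * (z.re - (a + b) / 2)) + (a - b) ^ 2 / 4 * (z.re ^ 2 + z.im ^ 2 + 1)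
      - (a ^ 2 + 1) * (b ^ 2 + 1))) * hz

theorem le_sub_sq_mul_cosh_sq_dist_I {a b : ℝ} {z : ℍ} (hz : z ∈ geodesic a b) :
    (a ^ 2 + 1) * (b ^ 2 + 1) ≤ (a - b) ^ 2 * cosh (dist z I) ^ 2 := by
  have hgap : 0 ≤ (a - b) ^ 2 * cosh (dist z I) ^ 2 - (a ^ 2 + 1) * (b ^ 2 + 1) := by
    rw [sub_sq_mul_cosh_sq_dist_I_sub hz]; positivity
  linarith

theorem exists_mem_geodesic_sub_sq_mul_cosh_sq_dist_I_eq {a b : ℝ} (hab : a ≠ b) :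
    ∃ z ∈ geodesic a b, (a - b) ^ 2 * cosh (dist z I) ^ 2 = (a ^ 2 + 1) * (b ^ 2 + 1) := by
  set A := (a ^ 2 + b ^ 2) / 2 + 1
  have hA : 0 < A := by positivity
  -- the real part that makes the square in `sub_sq_mul_cosh_sq_dist_I_sub` vanish
  set p := (a + b) / 2 - (a + b) * (a - b) ^ 2 / (4 * A)
  set Q := (a - b) ^ 2 / 4 - (p - (a + b) / 2) ^ 2
  have hQ : Q = (a - b) ^ 2 * (a ^ 2 + 1) * (b ^ 2 + 1) / (4 * A ^ 2) := by
    simp only [Q, p, A]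
    field_simp
    ring
  have hQ_pos : 0 < Q := by
    have := sub_ne_zero.mpr hab
    rw [hQ]; positivity
  set z : ℍ := ⟨⟨p, √Q⟩, sqrt_pos.mpr hQ_pos⟩
  have hz : z ∈ geodesic a b := by
    rw [mem_geodesic_iff]
    simp only [z, mk_re, mk_im, sq_sqrt hQ_pos.le, Q]
    ring
  refine ⟨z, hz, ?_⟩
  have hgap := sub_sq_mul_cosh_sq_dist_I_sub hz
  have h0 : (z.re - (a + b) / 2) * A + (a + b) * (a - b) ^ 2 / 4 = 0 := by
    simp only [z, mk_re, p]
    field_simp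
    ring
  rw [h0] at hgap
  simpa [sub_eq_zero] using hgap

theorem meetsClosedDisc_iff {a b r : ℝ} (hab : a ≠ b) (hr : 0 ≤ r) :
    MeetsClosedDisc a b r ↔ (a ^ 2 + 1) * (b ^ 2 + 1) ≤ (a - b) ^ 2 * cosh r ^ 2 := by
  have hcosh {d : ℝ} (hd : 0 ≤ d) : cosh d ^ 2 ≤ cosh r ^ 2 ↔ d ≤ r := by
    rw [sq_le_sq₀ (cosh_pos d).le (cosh_pos r).le, cosh_le_cosh, abs_of_nonneg hd,
      abs_of_nonneg hr]
  constructor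
  · rintro ⟨z, hz, hzr⟩
    calc (a ^ 2 + 1) * (b ^ 2 + 1) ≤ (a - b) ^ 2 * cosh (dist z I) ^ 2 :=
          le_sub_sq_mul_cosh_sq_dist_I hz
      _ ≤ (a - b) ^ 2 * cosh r ^ 2 := by
          gcongr (a - b) ^ 2 * ?_
          exact (hcosh dist_nonneg).mpr hzr
  · intro h
    obtain ⟨z, hz, hz_eq⟩ := exists_mem_geodesic_sub_sq_mul_cosh_sq_dist_I_eq hab
    refine ⟨z, hz, (hcosh dist_nonneg).mp ?_⟩
    have hab' : 0 < (a - b) ^ 2 := by have := sub_ne_zero.mpr hab; positivity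
    exact le_of_mul_le_mul_left (hz_eq.trans_le h) hab'

theorem add_inv_le_sub_sq_mul_iff {a c t : ℝ} (ht : t ≠ 0) :
    (a ^ 2 + 1) * ((a + t⁻¹) ^ 2 + 1) ≤ (a - (a + t⁻¹)) ^ 2 * (1 + c) ↔
      ((a ^ 2 + 1) * t + a) ^ 2 ≤ c := by
  have ht2 : 0 < t ^ 2 := by positivity
  rw [← mul_le_mul_iff_of_pos_right ht2]
  have hl : (a ^ 2 + 1) * ((a + t⁻¹) ^ 2 + 1) * t ^ 2 = ((a ^ 2 + 1) * t + a) ^ 2 + 1 := by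
    field_simp; ring
  have hr : (a - (a + t⁻¹)) ^ 2 * (1 + c) * t ^ 2 = 1 + c := by
    field_simp; ring
  rw [hl, hr, add_comm _ 1, add_le_add_iff_left]

theorem setOf_le_sub_sq_mul_eq_image (a : ℝ) {s : ℝ} (hs : 0 ≤ s) :
    {b | a ≠ b ∧ (a ^ 2 + 1) * (b ^ 2 + 1) ≤ (a - b) ^ 2 * (1 + s ^ 2)} =
      (fun t => a + t⁻¹) '' (Icc ((-a - s) / (a ^ 2 + 1)) ((-a + s) / (a ^ 2 + 1)) \ {0}) := by
  have hk : 0 < a ^ 2 + 1 := by positivity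
  have hIcc {t : ℝ} : ((a ^ 2 + 1) * t + a) ^ 2 ≤ s ^ 2 ↔
      t ∈ Icc ((-a - s) / (a ^ 2 + 1)) ((-a + s) / (a ^ 2 + 1)) := by
    rw [sq_le_sq, abs_of_nonneg hs, abs_le, mem_Icc, div_le_iff₀ hk, le_div_iff₀ hk]
    constructor <;> rintro ⟨h₁, h₂⟩ <;> constructor <;> linarith
  ext b
  constructor
  · rintro ⟨hab, hb⟩
    have hba : b - a ≠ 0 := sub_ne_zero.mpr hab.symm
    have hb_eq : a + (b - a)⁻¹⁻¹ = b := by rw [inv_inv, add_sub_cancel]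
    refine ⟨(b - a)⁻¹, ⟨?_, inv_ne_zero hba⟩, hb_eq⟩
    rw [← hIcc, ← add_inv_le_sub_sq_mul_iff (inv_ne_zero hba), hb_eq]
    exact hb
  · rintro ⟨t, ⟨ht, ht0 : t ≠ 0⟩, rfl⟩
    refine ⟨by simpa using ht0, ?_⟩
    rwa [add_inv_le_sub_sq_mul_iff ht0, hIcc]

theorem lintegral_image_add_inv (a : ℝ) {S : Set ℝ} (hS : MeasurableSet S) :
    ∫⁻ b in (fun t => a + t⁻¹) '' (S \ {0}), ENNReal.ofReal ((a - b) ^ 2)⁻¹ = volume S := by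
  have hS₀ : MeasurableSet (S \ {0}) := hS.diff (measurableSet_singleton 0)
  have hderiv (t) (ht : t ∈ S \ {0}) :
      HasDerivWithinAt (fun t => a + t⁻¹) (-(t ^ 2)⁻¹) (S \ {0}) t :=
    ((hasDerivAt_inv ht.2).const_add a).hasDerivWithinAt
  have hinj : InjOn (fun t : ℝ => a + t⁻¹) (S \ {0}) :=
    fun u _ v _ h => inv_injective (add_left_cancel h)
  rw [lintegral_image_eq_lintegral_abs_deriv_mul hS₀ hderiv hinj,
    ← measure_sdiff_null (measure_singleton 0), ← setLIntegral_one]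
  refine setLIntegral_congr_fun hS₀ fun t ht => ?_
  have ht0 : t ≠ 0 := ht.2
  rw [← ENNReal.ofReal_mul (abs_nonneg _), ← ENNReal.ofReal_one]
  congr 1
  simp [ht0]

theorem setLIntegral_prod_eq_lintegral_setLIntegral_preimage {α β : Type*}
    [MeasurableSpace α] [MeasurableSpace β] {μ : Measure α} {ν : Measure β} [SFinite ν]
    {E : Set (α × β)} (hE : MeasurableSet E) {f : α × β → ENNReal} (hf : Measurable f) :
    ∫⁻ p in E, f p ∂μ.prod ν = ∫⁻ x, ∫⁻ y in Prod.mk x ⁻¹' E, f (x, y) ∂ν ∂μ := by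
  rw [← lintegral_indicator hE, lintegral_prod _ (hf.indicator hE).aemeasurable]
  congr with x
  rw [← lintegral_indicator (measurable_prodMk_left hE)]
  rfl

theorem lintegral_setOf_le_sub_sq_mul (a : ℝ) {s : ℝ} (hs : 0 ≤ s) :
    ∫⁻ b in {b | a ≠ b ∧ (a ^ 2 + 1) * (b ^ 2 + 1) ≤ (a - b) ^ 2 * (1 + s ^ 2)},
      ENNReal.ofReal ((a - b) ^ 2)⁻¹ = ENNReal.ofReal (2 * s / (a ^ 2 + 1)) := by
  rw [setOf_le_sub_sq_mul_eq_image a hs, lintegral_image_add_inv a measurableSet_Icc,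
    Real.volume_Icc]
  congr 1
  ring

theorem lintegral_ofReal_div_sq_add_one {c : ℝ} (hc : 0 ≤ c) :
    ∫⁻ x : ℝ, ENNReal.ofReal (c / (x ^ 2 + 1)) = ENNReal.ofReal (c * π) := by
  have hfun : (fun x : ℝ => c / (x ^ 2 + 1)) = fun x => c * (1 + x ^ 2)⁻¹ := by
    ext x; rw [div_eq_mul_inv, add_comm]
  rw [← ofReal_integral_eq_lintegral_ofReal, hfun, integral_const_mul,
    integral_univ_inv_one_add_sq]
  · rw [hfun]; exact integrable_inv_one_add_sq.const_mul c
  · exact ae_of_all _ fun x => by positivity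

/-- For every r > 0, the Lebesgue integral over ℝ² of (x − y)⁻² over
E_r = {(x,y) : x ≠ y and γ(x,y) meets B̄_r(i)} equals 2π·sinh r. -/
theorem integral_over_Er (r : ℝ) (hr : 0 < r) :
    ∫ p in {p : ℝ × ℝ | p.1 ≠ p.2 ∧ MeetsClosedDisc p.1 p.2 r}, ((p.1 - p.2) ^ 2)⁻¹ =
      2 * Real.pi * Real.sinh r := by
  have hs : 0 ≤ sinh r := sinh_nonneg_iff.mpr hr.le
  set E := {p : ℝ × ℝ | p.1 ≠ p.2 ∧
    (p.1 ^ 2 + 1) * (p.2 ^ 2 + 1) ≤ (p.1 - p.2) ^ 2 * (1 + sinh r ^ 2)}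
  have hE_eq : {p : ℝ × ℝ | p.1 ≠ p.2 ∧ MeetsClosedDisc p.1 p.2 r} = E := by
    ext p; exact and_congr_right fun h => by rw [meetsClosedDisc_iff h hr.le, cosh_sq']
  have hE : MeasurableSet E := by measurability
  have hf : Measurable fun p : ℝ × ℝ => ((p.1 - p.2) ^ 2)⁻¹ := by fun_prop
  rw [hE_eq, integral_eq_lintegral_of_nonneg_ae (ae_of_all _ fun p => by positivity)
    hf.aestronglyMeasurable, Measure.volume_eq_prod,
    setLIntegral_prod_eq_lintegral_setLIntegral_preimage hE hf.ennreal_ofReal]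
  simp only [E, preimage_ofPred_eq, lintegral_setOf_le_sub_sq_mul _ hs,
    lintegral_ofReal_div_sq_add_one (by positivity : 0 ≤ 2 * sinh r)]
  rw [ENNReal.toReal_ofReal (by positivity)]
  ring
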